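/- arXiv:1506.06801 — 6 statements merged into one kernel-verified Lean document; each statement's English description precedes it below -/
import Mathlib

section
/- For a real-valued function Φ that is twice continuously differentiable on (0,∞) with Φ'' > 0 and 1/Φ'' concave, the map (u,v) ↦ Φ''(u)·v² is jointly convex on (0,∞) × ℝ. -/
open Set

/-- Cauchy–Schwarz / Sedrakyan type inequality used for joint convexity. -/
lemma sedrakyan_aux (A B t s v₁ v₂ : ℝ) (hA : 0 < A) (hB : 0 < B) (ht : 0 ≤ t) (hs : 0 ≤ s) :
    (t * v₁ + s * v₂) ^ 2 ≤
      (t * (1 / A) + s * (1 / B)) * (t * (A * v₁ ^ 2) + s * (B * v₂ ^ 2)) := by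
  rw [mul_one_div, mul_one_div, div_add_div _ _ hA.ne' hB.ne', div_mul_eq_mul_div, le_div_iff₀ (by positivity)]
  nlinarith [mul_nonneg (mul_nonneg ht hs) (sq_nonneg (A * v₁ - B * v₂))]

/-- For a real-valued function `Φ` that is twice continuously differentiable on `(0,∞)` with
`Φ'' > 0` and `1/Φ''` concave, the map `(u,v) ↦ Φ''(u)·v²` is jointly convex on
`(0,∞) × ℝ`. -/
theorem phi_second_deriv_quadratic_convex (Φ Φ' Φ'' : ℝ → ℝ)
    (hd1 : ∀ x ∈ Ioi (0 : ℝ), HasDerivAt Φ (Φ' x) x)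
    (hd2 : ∀ x ∈ Ioi (0 : ℝ), HasDerivAt Φ' (Φ'' x) x)
    (hcont : ContinuousOn Φ'' (Ioi 0))
    (hpos : ∀ x ∈ Ioi (0 : ℝ), 0 < Φ'' x)
    (hconc : ConcaveOn ℝ (Ioi 0) (fun x => 1 / Φ'' x)) :
    ConvexOn ℝ ((Ioi (0 : ℝ)) ×ˢ (univ : Set ℝ)) (fun p => Φ'' p.1 * p.2 ^ 2) := by
  refine ⟨(convex_Ioi 0).prod convex_univ, ?_⟩
  rintro ⟨u₁, v₁⟩ ⟨hu₁, -⟩ ⟨u₂, v₂⟩ ⟨hu₂, -⟩ t s ht hs hts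
  simp only [Prod.smul_mk, Prod.mk_add_mk, smul_eq_mul]
  have hA := hpos u₁ hu₁
  have hB := hpos u₂ hu₂
  have hmid : t * u₁ + s * u₂ ∈ Ioi (0 : ℝ) := (convex_Ioi 0) hu₁ hu₂ ht hs hts
  have hC := hpos _ hmid
  have hconc' := hconc.2 hu₁ hu₂ ht hs hts
  simp only [smul_eq_mul] at hconc'
  set A := Φ'' u₁ with hAdef
  set B := Φ'' u₂ with hBdef
  set C := Φ'' (t * u₁ + s * u₂) with hCdef
  set den := t * (1 / A) + s * (1 / B) with hden_def
  -- hconc' : den ≤ 1 / C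
  have hCden : C * den ≤ 1 := by
    have h := mul_le_mul_of_nonneg_left hconc' hC.le
    rwa [mul_one_div, div_self hC.ne'] at h
  have key := sedrakyan_aux A B t s v₁ v₂ hA hB ht hs
  have hRHS : 0 ≤ t * (A * v₁ ^ 2) + s * (B * v₂ ^ 2) :=
    add_nonneg (mul_nonneg ht (by positivity)) (mul_nonneg hs (by positivity))
  calc C * (t * v₁ + s * v₂) ^ 2
      ≤ C * (den * (t * (A * v₁ ^ 2) + s * (B * v₂ ^ 2))) :=
        mul_le_mul_of_nonneg_left key hC.le
    _ = (C * den) * (t * (A * v₁ ^ 2) + s * (B * v₂ ^ 2)) := by ring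
    _ ≤ 1 * (t * (A * v₁ ^ 2) + s * (B * v₂ ^ 2)) := mul_le_mul_of_nonneg_right hCden hRHS
    _ = t * (A * v₁ ^ 2) + s * (B * v₂ ^ 2) := one_mul _
end

section
/- Let Φ : (0,∞) → ℝ be twice continuously differentiable. Then the Brègman divergence (u,v) ↦ Φ(u+v) − Φ(u) − Φ'(u)·v is jointly convex on its domain if and only if (u,v) ↦ Φ''(u)·v² is jointly convex. -/
/-!
Write `D` for the Brègman divergence and `g(u, v) = Φ''(u) v²`. Along a ray, `h(t) = D(u, t v)`
satisfies `h(0) = h'(0) = 0` and `h''(t) = g(u + t v, v)`. Since `(u, v) ↦ (u, t v)` and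
`(u, v) ↦ (u + t v, v)` are linear, for a convex combination `a p + b q` the function
`ψ(t) = a h_p(t) + b h_q(t) - h_{ap+bq}(t)` is the convexity defect of `D` at
`(p₁, t p₂), (q₁, t q₂)`, while `ψ''(t)` is the convexity defect of `g` at
`(p₁ + t p₂, p₂), (q₁ + t q₂, q₂)`. If `g` is convex, then `ψ'' ≥ 0` on `[0, 1]`, so `ψ(1) ≥ 0`;
if `D` is convex, then `ψ ≥ 0` for small `t > 0`, so `ψ''(0) ≥ 0` by Taylor's formula at order two.
-/

open Set Filter Topology

section Calculus

variable {f f' f'' : ℝ → ℝ} {a b c : ℝ}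

theorem monotoneOn_Icc_of_hasDerivAt_nonneg (hf : ∀ x ∈ Icc a b, HasDerivAt f (f' x) x)
    (hf' : ∀ x ∈ Icc a b, 0 ≤ f' x) : MonotoneOn f (Icc a b) :=
  monotoneOn_of_hasDerivWithinAt_nonneg (convex_Icc a b)
    (fun x hx => (hf x hx).continuousAt.continuousWithinAt)
    (fun x hx => (hf x (interior_subset hx)).hasDerivWithinAt)
    (fun x hx => hf' x (interior_subset hx))

theorem nonneg_of_deriv2_nonneg (hab : a ≤ b) (hf : ∀ x ∈ Icc a b, HasDerivAt f (f' x) x)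
    (hf' : ∀ x ∈ Icc a b, HasDerivAt f' (f'' x) x) (hfa : f a = 0) (hf'a : f' a = 0)
    (hf'' : ∀ x ∈ Icc a b, 0 ≤ f'' x) : 0 ≤ f b := by
  have hf'_nonneg : ∀ x ∈ Icc a b, 0 ≤ f' x := fun x hx =>
    hf'a ▸ monotoneOn_Icc_of_hasDerivAt_nonneg hf' hf'' (left_mem_Icc.2 hab) hx hx.1
  exact hfa ▸ monotoneOn_Icc_of_hasDerivAt_nonneg hf hf'_nonneg (left_mem_Icc.2 hab)
    (right_mem_Icc.2 hab) hab

theorem tendsto_div_sq_of_hasDerivAt2 (hf : ∀ᶠ x in 𝓝 a, HasDerivAt f (f' x) x)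
    (hf' : HasDerivAt f' c a) (hfa : f a = 0) (hf'a : f' a = 0) :
    Tendsto (fun x => f x / (x - a) ^ 2) (𝓝[>] a) (𝓝 (c / 2)) := by
  have hslope : Tendsto (fun x => f' x / (2 * (x - a))) (𝓝[>] a) (𝓝 (c / 2)) := by
    refine ((hf'.tendsto_slope.mono_left (nhdsGT_le_nhdsNE a)).div_const 2).congr fun x => ?_
    rw [slope_def_field, hf'a, sub_zero, div_div, mul_comm]
  have hsq : ∀ x, HasDerivAt (fun x => (x - a) ^ 2) (2 * (x - a)) x := fun x => by
    simpa using ((hasDerivAt_id x).sub_const a).fun_pow 2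
  refine HasDerivAt.lhopital_zero_nhdsGT (hf.filter_mono nhdsWithin_le_nhds)
    (Eventually.of_forall hsq) ?_ ?_ ?_ hslope
  · filter_upwards [self_mem_nhdsWithin] with x (hx : a < x)
    have := sub_pos.2 hx
    positivity
  · simpa [hfa] using
      hf.self_of_nhds.continuousAt.tendsto.mono_left (nhdsWithin_le_nhds (s := Ioi a))
  · have : ContinuousAt (fun x => (x - a) ^ 2) a := by fun_prop
    simpa using this.tendsto.mono_left nhdsWithin_le_nhds

theorem nonneg_of_hasDerivAt2_of_nonneg (hf : ∀ᶠ x in 𝓝 a, HasDerivAt f (f' x) x)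
    (hf' : HasDerivAt f' c a) (hfa : f a = 0) (hf'a : f' a = 0) (hpos : ∀ᶠ x in 𝓝[>] a, 0 ≤ f x) :
    0 ≤ c := by
  have := ge_of_tendsto (tendsto_div_sq_of_hasDerivAt2 hf hf' hfa hf'a)
    (hpos.mono fun x hx => div_nonneg hx (sq_nonneg _))
  linarith

end Calculus

section ConvexityDefect

variable {E F : Type*} [AddCommGroup E] [Module ℝ E] [AddCommGroup F] [Module ℝ F]

def convexityDefect (G : E → ℝ → ℝ) (a b : ℝ) (p q : E) (t : ℝ) : ℝ :=
  a * G p t + b * G q t - G (a • p + b • q) t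

theorem hasDerivAt_convexityDefect {G G' : E → ℝ → ℝ} {a b t : ℝ} {p q : E}
    (hp : HasDerivAt (G p) (G' p t) t) (hq : HasDerivAt (G q) (G' q t) t)
    (hc : HasDerivAt (G (a • p + b • q)) (G' (a • p + b • q) t) t) :
    HasDerivAt (convexityDefect G a b p q) (convexityDefect G' a b p q t) t :=
  ((hp.const_mul a).add (hq.const_mul b)).sub hc

theorem ConvexOn.convexityDefect_nonneg {s : Set F} {f : F → ℝ} (hf : ConvexOn ℝ s f)
    (L : ℝ → E →ₗ[ℝ] F) {a b t : ℝ} {p q : E} (hp : L t p ∈ s) (hq : L t q ∈ s) (ha : 0 ≤ a)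
    (hb : 0 ≤ b) (hab : a + b = 1) : 0 ≤ convexityDefect (fun x t => f (L t x)) a b p q t :=
  sub_nonneg.2 ((hf.comp_linearMap (L t)).2 hp hq ha hb hab)

end ConvexityDefect

def scaleSnd (t : ℝ) : ℝ × ℝ →ₗ[ℝ] ℝ × ℝ := (LinearMap.fst ℝ ℝ ℝ).prod (t • LinearMap.snd ℝ ℝ ℝ)

def shear (t : ℝ) : ℝ × ℝ →ₗ[ℝ] ℝ × ℝ :=
  (LinearMap.fst ℝ ℝ ℝ + t • LinearMap.snd ℝ ℝ ℝ).prod (LinearMap.snd ℝ ℝ ℝ)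

@[simp] theorem scaleSnd_apply (t : ℝ) (p : ℝ × ℝ) : scaleSnd t p = (p.1, t * p.2) := rfl

@[simp] theorem shear_apply (t : ℝ) (p : ℝ × ℝ) : shear t p = (p.1 + t * p.2, p.2) := rfl

section Bregman

variable {Φ Φ' Φ'' : ℝ → ℝ}

def bregman (Φ Φ' : ℝ → ℝ) (p : ℝ × ℝ) : ℝ := Φ (p.1 + p.2) - Φ p.1 - Φ' p.1 * p.2

def bregmanDomain : Set (ℝ × ℝ) := {p | 0 < p.1 ∧ 0 < p.1 + p.2}

theorem convex_bregmanDomain : Convex ℝ bregmanDomain :=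
  (convex_halfSpace_gt (LinearMap.fst ℝ ℝ ℝ).isLinear 0).inter
    (convex_halfSpace_gt (LinearMap.fst ℝ ℝ ℝ + LinearMap.snd ℝ ℝ ℝ).isLinear 0)

def bregmanRayDeriv (Φ' : ℝ → ℝ) (p : ℝ × ℝ) (t : ℝ) : ℝ := (Φ' (p.1 + t * p.2) - Φ' p.1) * p.2

theorem hasDerivAt_bregman_scaleSnd {p : ℝ × ℝ} {t : ℝ}
    (hΦ : HasDerivAt Φ (Φ' (p.1 + t * p.2)) (p.1 + t * p.2))
    (hΦ' : HasDerivAt Φ' (Φ'' (p.1 + t * p.2)) (p.1 + t * p.2)) :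
    HasDerivAt (fun t => bregman Φ Φ' (scaleSnd t p)) (bregmanRayDeriv Φ' p t) t ∧
      HasDerivAt (bregmanRayDeriv Φ' p) (Φ'' (shear t p).1 * (shear t p).2 ^ 2) t := by
  have hline : HasDerivAt (fun t => p.1 + t * p.2) p.2 t := by
    simpa using ((hasDerivAt_id t).mul_const p.2).const_add p.1
  constructor
  · exact (((hΦ.comp t hline).sub_const (Φ p.1)).sub
      ((hasDerivAt_mul_const p.2).const_mul (Φ' p.1))).congr_deriv (by rw [bregmanRayDeriv]; ring)
  · exact (((hΦ'.comp t hline).sub_const (Φ' p.1)).mul_const p.2).congr_deriv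
      (by rw [shear_apply]; ring)

theorem hasDerivAt_convexityDefect_bregman {a b t : ℝ} {p q : ℝ × ℝ}
    (hd1 : ∀ x ∈ Ioi (0 : ℝ), HasDerivAt Φ (Φ' x) x)
    (hd2 : ∀ x ∈ Ioi (0 : ℝ), HasDerivAt Φ' (Φ'' x) x) (hp : 0 < p.1 + t * p.2)
    (hq : 0 < q.1 + t * q.2) (hc : 0 < (a • p + b • q).1 + t * (a • p + b • q).2) :
    HasDerivAt (convexityDefect (fun x t => bregman Φ Φ' (scaleSnd t x)) a b p q)
        (convexityDefect (bregmanRayDeriv Φ') a b p q t) t ∧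
      HasDerivAt (convexityDefect (bregmanRayDeriv Φ') a b p q)
        (convexityDefect (fun x t => Φ'' (shear t x).1 * (shear t x).2 ^ 2) a b p q t) t := by
  have hp' := hasDerivAt_bregman_scaleSnd (hd1 _ hp) (hd2 _ hp)
  have hq' := hasDerivAt_bregman_scaleSnd (hd1 _ hq) (hd2 _ hq)
  have hc' := hasDerivAt_bregman_scaleSnd (hd1 _ hc) (hd2 _ hc)
  exact ⟨hasDerivAt_convexityDefect hp'.1 hq'.1 hc'.1,
    hasDerivAt_convexityDefect hp'.2 hq'.2 hc'.2⟩

theorem convexOn_bregman_of_convexOn_quadratic (hd1 : ∀ x ∈ Ioi (0 : ℝ), HasDerivAt Φ (Φ' x) x)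
    (hd2 : ∀ x ∈ Ioi (0 : ℝ), HasDerivAt Φ' (Φ'' x) x)
    (hg : ConvexOn ℝ (Ioi (0 : ℝ) ×ˢ (univ : Set ℝ)) (fun p => Φ'' p.1 * p.2 ^ 2)) :
    ConvexOn ℝ bregmanDomain (bregman Φ Φ') := by
  refine ⟨convex_bregmanDomain, fun p hp q hq a b ha hb hab => ?_⟩
  have hpos : ∀ x ∈ bregmanDomain, ∀ t ∈ Icc (0 : ℝ) 1, 0 < x.1 + t * x.2 := fun x hx t ht =>
    (convex_Ioi (0 : ℝ)).add_smul_mem hx.1 hx.2 ht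
  have hc := convex_bregmanDomain hp hq ha hb hab
  have hderiv := fun t ht => hasDerivAt_convexityDefect_bregman hd1 hd2 (hpos p hp t ht)
    (hpos q hq t ht) (hpos _ hc t ht)
  have key := nonneg_of_deriv2_nonneg zero_le_one (fun t ht => (hderiv t ht).1)
    (fun t ht => (hderiv t ht).2) (by simp [convexityDefect, bregman])
    (by simp [convexityDefect, bregmanRayDeriv])
    (fun t ht => hg.convexityDefect_nonneg shear ⟨hpos p hp t ht, mem_univ _⟩
      ⟨hpos q hq t ht, mem_univ _⟩ ha hb hab)
  simp only [convexityDefect, scaleSnd_apply, one_mul, Prod.mk.eta] at key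
  exact sub_nonneg.1 key

theorem convexOn_quadratic_of_convexOn_bregman (hd1 : ∀ x ∈ Ioi (0 : ℝ), HasDerivAt Φ (Φ' x) x)
    (hd2 : ∀ x ∈ Ioi (0 : ℝ), HasDerivAt Φ' (Φ'' x) x)
    (hD : ConvexOn ℝ bregmanDomain (bregman Φ Φ')) :
    ConvexOn ℝ (Ioi (0 : ℝ) ×ˢ (univ : Set ℝ)) (fun p => Φ'' p.1 * p.2 ^ 2) := by
  have hs : Convex ℝ (Ioi (0 : ℝ) ×ˢ (univ : Set ℝ)) := (convex_Ioi 0).prod convex_univ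
  refine ⟨hs, fun p hp q hq a b ha hb hab => ?_⟩
  have hpos : ∀ x ∈ Ioi (0 : ℝ) ×ˢ (univ : Set ℝ), ∀ᶠ t in 𝓝 0, 0 < x.1 + t * x.2 :=
    fun x hx => (by fun_prop : Continuous fun t : ℝ => x.1 + t * x.2).continuousAt.eventually
      (lt_mem_nhds (by simpa using hx.1))
  set ψ := convexityDefect (fun x t => bregman Φ Φ' (scaleSnd t x)) a b p q
  set ψ' := convexityDefect (bregmanRayDeriv Φ') a b p q
  have hderiv : ∀ᶠ t in 𝓝 0, HasDerivAt ψ (ψ' t) t ∧ HasDerivAt ψ'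
      (convexityDefect (fun x t => Φ'' (shear t x).1 * (shear t x).2 ^ 2) a b p q t) t := by
    filter_upwards [hpos p hp, hpos q hq, hpos _ (hs hp hq ha hb hab)] with t hpt hqt hct
    exact hasDerivAt_convexityDefect_bregman hd1 hd2 hpt hqt hct
  have hnonneg : ∀ᶠ t in 𝓝[>] 0, 0 ≤ ψ t := by
    filter_upwards [nhdsWithin_le_nhds (hpos p hp), nhdsWithin_le_nhds (hpos q hq)] with t hpt hqt
    exact hD.convexityDefect_nonneg scaleSnd ⟨hp.1, hpt⟩ ⟨hq.1, hqt⟩ ha hb hab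
  have key := nonneg_of_hasDerivAt2_of_nonneg (hderiv.mono fun t h => h.1)
    hderiv.self_of_nhds.2 (by simp [ψ, convexityDefect, bregman])
    (by simp [ψ', convexityDefect, bregmanRayDeriv]) hnonneg
  simp only [convexityDefect, shear_apply, zero_mul, add_zero, Prod.mk.eta] at key
  exact sub_nonneg.1 key

end Bregman

theorem bregman_convex_iff_second_deriv_quadratic_convex_general (Φ Φ' Φ'' : ℝ → ℝ)
    (hd1 : ∀ x ∈ Ioi (0 : ℝ), HasDerivAt Φ (Φ' x) x)
    (hd2 : ∀ x ∈ Ioi (0 : ℝ), HasDerivAt Φ' (Φ'' x) x) :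
    ConvexOn ℝ {p : ℝ × ℝ | 0 < p.1 ∧ 0 < p.1 + p.2}
        (fun p => Φ (p.1 + p.2) - Φ p.1 - Φ' p.1 * p.2) ↔
      ConvexOn ℝ ((Ioi (0 : ℝ)) ×ˢ (univ : Set ℝ)) (fun p => Φ'' p.1 * p.2 ^ 2) :=
  ⟨convexOn_quadratic_of_convexOn_bregman hd1 hd2, convexOn_bregman_of_convexOn_quadratic hd1 hd2⟩

/-- Let `Φ : (0,∞) → ℝ` be twice continuously differentiable (four times differentiable where
needed).  Then the Brègman divergence `(u,v) ↦ Φ(u+v) − Φ(u) − Φ'(u)·v` is jointly convex on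
`{(u,v) | u > 0 ∧ u + v > 0}` if and only if `(u,v) ↦ Φ''(u)·v²` is jointly convex on
`(0,∞) × ℝ`. -/
theorem bregman_convex_iff_second_deriv_quadratic_convex (Φ Φ' Φ'' Φ''' Φ'''' : ℝ → ℝ)
    (hd1 : ∀ x ∈ Ioi (0 : ℝ), HasDerivAt Φ (Φ' x) x)
    (hd2 : ∀ x ∈ Ioi (0 : ℝ), HasDerivAt Φ' (Φ'' x) x)
    (hd3 : ∀ x ∈ Ioi (0 : ℝ), HasDerivAt Φ'' (Φ''' x) x)
    (hd4 : ∀ x ∈ Ioi (0 : ℝ), HasDerivAt Φ''' (Φ'''' x) x)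
    (hcont : ContinuousOn Φ'' (Ioi 0)) :
    ConvexOn ℝ {p : ℝ × ℝ | 0 < p.1 ∧ 0 < p.1 + p.2}
        (fun p => Φ (p.1 + p.2) - Φ p.1 - Φ' p.1 * p.2) ↔
      ConvexOn ℝ ((Ioi (0 : ℝ)) ×ˢ (univ : Set ℝ)) (fun p => Φ'' p.1 * p.2 ^ 2) :=
  bregman_convex_iff_second_deriv_quadratic_convex_general Φ Φ' Φ'' hd1 hd2
end

section
/- Let Φ ∈ (C1) and suppose the Φ-entropy H_Φ(Z) = E Φ(Z) − Φ(E Z) is subadditive for functions of two independent random variables. Then for Z a measurable function of independent random variables X₁, X₂, one has E₁[H_Φ(Z | X₁)] ≥ H_Φ(E₁ Z), where E₁ denotes expectation over X₁ and H_Φ(Z | X₁) is the Φ-entropy of Z conditional on X₁ (i.e., with respect to X₂). -/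
/-!
By Fubini, both sides of the subadditivity inequality share the term `E Φ(Z)`, and after
cancelling it what remains is the claim. The only point is that `E₂[E₁ Φ(Z) − Φ(E₁ Z)]` may be
split, i.e. that `Φ(E₁ Z)` is integrable: it is bounded above by `E₁ Φ(Z)` (Jensen) and below by
an affine minorant of the convex function `Φ`.
-/

open MeasureTheory

theorem ContinuousOn.comp_aemeasurable_of_forall_mem {α β γ : Type*} [MeasurableSpace α]
    [TopologicalSpace β] [MeasurableSpace β] [OpensMeasurableSpace β]
    [TopologicalSpace γ] [MeasurableSpace γ] [BorelSpace γ]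
    {μ : Measure α} {g : β → γ} {f : α → β} {s : Set β}
    (hg : ContinuousOn g s) (hf : AEMeasurable f μ) (hfs : ∀ x, f x ∈ s) :
    AEMeasurable (g ∘ f) μ :=
  (hg.domRestrict.measurable.comp_aemeasurable (hf.subtype_mk (hfs := hfs)) :)

namespace ConvexOn

variable {α : Type*} [MeasurableSpace α] {μ : Measure α} {Φ : ℝ → ℝ}

theorem integrable_comp_of_le [IsFiniteMeasure μ] {s : Set ℝ} (hΦ : ConvexOn ℝ s Φ)
    (hΦc : ContinuousOn Φ s) (hs : IsClosed s)
    {f F : α → ℝ} (hf : Integrable f μ) (hfs : ∀ x, f x ∈ s) (hF : Integrable F μ)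
    (hΦF : ∀ᵐ x ∂μ, Φ (f x) ≤ F x) :
    Integrable (Φ ∘ f) μ := by
  obtain ⟨c, c', hcc'⟩ := hΦ.exists_affine_le_real hs hΦc.lowerSemicontinuousOn
  exact integrable_of_le_of_le
    (hΦc.comp_aemeasurable_of_forall_mem hf.aemeasurable hfs).aestronglyMeasurable
    (Filter.Eventually.of_forall fun x => hcc' (f x) (hfs x)) hΦF
    ((hf.const_mul c).add (integrable_const c')) hF

theorem integrable_comp_integral_fst {β : Type*} [MeasurableSpace β] {ν : Measure β}
    [IsProbabilityMeasure μ] [IsFiniteMeasure ν]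
    (hΦ : ConvexOn ℝ (Set.Ici 0) Φ) (hΦc : ContinuousOn Φ (Set.Ici 0))
    {Z : α → β → ℝ} (hZ₀ : ∀ x y, 0 ≤ Z x y)
    (hZ : Integrable (fun p : α × β => Z p.1 p.2) (μ.prod ν))
    (hΦZ : Integrable (fun p : α × β => Φ (Z p.1 p.2)) (μ.prod ν)) :
    Integrable (fun y => Φ (∫ x, Z x y ∂μ)) ν := by
  refine hΦ.integrable_comp_of_le hΦc isClosed_Ici hZ.swap.integral_prod_left
    (fun y => Set.mem_Ici.2 (integral_nonneg (hZ₀ · y))) hΦZ.swap.integral_prod_left ?_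
  filter_upwards [hZ.prod_left_ae, hΦZ.prod_left_ae] with y hZy hΦZy
  exact hΦ.map_integral_le hΦc isClosed_Ici (.of_forall (hZ₀ · y)) hZy hΦZy

end ConvexOn

theorem conditional_jensen_from_subadditivity_general
    {Ω₁ Ω₂ : Type} [MeasurableSpace Ω₁] [MeasurableSpace Ω₂]
    (μ₁ : Measure Ω₁) (μ₂ : Measure Ω₂)
    [IsProbabilityMeasure μ₁] [IsProbabilityMeasure μ₂]
    (Φ : ℝ → ℝ) (hΦcont : ContinuousOn Φ (Set.Ici 0)) (hΦconv : ConvexOn ℝ (Set.Ici 0) Φ)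
    (Z : Ω₁ → Ω₂ → ℝ)
    (hZnonneg : ∀ ω₁ ω₂, 0 ≤ Z ω₁ ω₂)
    (hZint : Integrable (fun p : Ω₁ × Ω₂ => Z p.1 p.2) (μ₁.prod μ₂))
    (hΦZint : Integrable (fun p : Ω₁ × Ω₂ => Φ (Z p.1 p.2)) (μ₁.prod μ₂))
    -- subadditivity of the `Φ`-entropy for `n = 2`:
    (hsub : (∫ ω₁, ∫ ω₂, Φ (Z ω₁ ω₂) ∂μ₂ ∂μ₁) - Φ (∫ ω₁, ∫ ω₂, Z ω₁ ω₂ ∂μ₂ ∂μ₁) ≤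
      (∫ ω₂, ((∫ ω₁, Φ (Z ω₁ ω₂) ∂μ₁) - Φ (∫ ω₁, Z ω₁ ω₂ ∂μ₁)) ∂μ₂) +
        ∫ ω₁, ((∫ ω₂, Φ (Z ω₁ ω₂) ∂μ₂) - Φ (∫ ω₂, Z ω₁ ω₂ ∂μ₂)) ∂μ₁) :
    (∫ ω₂, Φ (∫ ω₁, Z ω₁ ω₂ ∂μ₁) ∂μ₂) - Φ (∫ ω₂, ∫ ω₁, Z ω₁ ω₂ ∂μ₁ ∂μ₂) ≤
      ∫ ω₁, ((∫ ω₂, Φ (Z ω₁ ω₂) ∂μ₂) - Φ (∫ ω₂, Z ω₁ ω₂ ∂μ₂)) ∂μ₁ := by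
  have hsplit : ∫ ω₂, ((∫ ω₁, Φ (Z ω₁ ω₂) ∂μ₁) - Φ (∫ ω₁, Z ω₁ ω₂ ∂μ₁)) ∂μ₂ =
      (∫ ω₂, ∫ ω₁, Φ (Z ω₁ ω₂) ∂μ₁ ∂μ₂) - ∫ ω₂, Φ (∫ ω₁, Z ω₁ ω₂ ∂μ₁) ∂μ₂ :=
    integral_sub hΦZint.swap.integral_prod_left
      (hΦconv.integrable_comp_integral_fst hΦcont hZnonneg hZint hΦZint)
  rw [hsplit, integral_integral_swap hΦZint, integral_integral_swap hZint] at hsub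
  linarith

/-- Let `Φ` be in the class (C1) and suppose the `Φ`-entropy `H_Φ(Z) = E Φ(Z) − Φ(E Z)` is
subadditive for measurable functions of two independent random variables `X₁, X₂` (modelled on
a product probability space).  Then `E₁[H_Φ(Z | X₁)] ≥ H_Φ(E₁ Z)`, where `E₁` is expectation
over `X₁`, and `H_Φ(Z | X₁)` is the `Φ`-entropy of `Z` with respect to `X₂` (conditional on
`X₁`). -/
theorem conditional_jensen_from_subadditivity
    {Ω₁ Ω₂ : Type} [MeasurableSpace Ω₁] [MeasurableSpace Ω₂]
    (μ₁ : Measure Ω₁) (μ₂ : Measure Ω₂)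
    [IsProbabilityMeasure μ₁] [IsProbabilityMeasure μ₂]
    (Φ : ℝ → ℝ) (hΦcont : ContinuousOn Φ (Set.Ici 0)) (hΦconv : ConvexOn ℝ (Set.Ici 0) Φ)
    (Z : Ω₁ → Ω₂ → ℝ)
    (hZmeas : Measurable fun p : Ω₁ × Ω₂ => Z p.1 p.2)
    (hZnonneg : ∀ ω₁ ω₂, 0 ≤ Z ω₁ ω₂)
    (hZint : Integrable (fun p : Ω₁ × Ω₂ => Z p.1 p.2) (μ₁.prod μ₂))
    (hΦZint : Integrable (fun p : Ω₁ × Ω₂ => Φ (Z p.1 p.2)) (μ₁.prod μ₂))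
    -- subadditivity of the `Φ`-entropy for `n = 2`:
    (hsub : (∫ ω₁, ∫ ω₂, Φ (Z ω₁ ω₂) ∂μ₂ ∂μ₁) - Φ (∫ ω₁, ∫ ω₂, Z ω₁ ω₂ ∂μ₂ ∂μ₁) ≤
      (∫ ω₂, ((∫ ω₁, Φ (Z ω₁ ω₂) ∂μ₁) - Φ (∫ ω₁, Z ω₁ ω₂ ∂μ₁)) ∂μ₂) +
        ∫ ω₁, ((∫ ω₂, Φ (Z ω₁ ω₂) ∂μ₂) - Φ (∫ ω₂, Z ω₁ ω₂ ∂μ₂)) ∂μ₁) :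
    (∫ ω₂, Φ (∫ ω₁, Z ω₁ ω₂ ∂μ₁) ∂μ₂) - Φ (∫ ω₂, ∫ ω₁, Z ω₁ ω₂ ∂μ₁ ∂μ₂) ≤
      ∫ ω₁, ((∫ ω₂, Φ (Z ω₁ ω₂) ∂μ₂) - Φ (∫ ω₂, Z ω₁ ω₂ ∂μ₂)) ∂μ₁ :=
  conditional_jensen_from_subadditivity_general μ₁ μ₂ Φ hΦcont hΦconv Z hZnonneg hZint hΦZint hsub
end

section
/- For any t ∈ [0,1], the convexity of H_Φ : Z ↦ E Φ(Z) − Φ(E Z) over random variables is equivalent to the joint convexity of the map (u,v) ↦ t·Φ(u) + (1−t)·Φ(v) − Φ(t·u + (1−t)·v) for all t ∈ [0,1]. -/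
/-!
Write `g_t(u, v) = t Φ(u) + (1 - t) Φ(v) - Φ(t u + (1 - t) v)`. For integrable `X, Y`,
`t H_Φ(X) + (1 - t) H_Φ(Y) - H_Φ(t X + (1 - t) Y) = E g_t(X, Y) - g_t(E X, E Y)`,
so convexity of `H_Φ` says exactly that `g_t` satisfies Jensen's inequality for every law of
`(X, Y)`. That in turn is equivalent to convexity of `g_t`: two-point laws give the convexity
inequality itself, and conversely a continuous convex function on a closed convex set
satisfies Jensen's inequality.
-/

open MeasureTheory Set

/-- The classical `Φ`-entropy `H_Φ(Z) = E Φ(Z) − Φ(E Z)` of a real random variable. -/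
noncomputable def entPhi {Ω : Type} [MeasurableSpace Ω] (μ : Measure Ω) (Φ : ℝ → ℝ)
    (Z : Ω → ℝ) : ℝ :=
  (∫ ω, Φ (Z ω) ∂μ) - Φ (∫ ω, Z ω ∂μ)

noncomputable def twoPointMeasure (a b : ℝ) : Measure Bool :=
  ENNReal.ofReal a • Measure.dirac true + ENNReal.ofReal b • Measure.dirac false

instance (a b : ℝ) : IsFiniteMeasure (twoPointMeasure a b) :=
  ⟨by simp [twoPointMeasure, ENNReal.add_lt_top]⟩

lemma isProbabilityMeasure_twoPointMeasure {a b : ℝ} (ha : 0 ≤ a) (hb : 0 ≤ b)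
    (hab : a + b = 1) : IsProbabilityMeasure (twoPointMeasure a b) :=
  ⟨by simp [twoPointMeasure, ← ENNReal.ofReal_add ha hb, hab]⟩

lemma integral_twoPointMeasure {a b : ℝ} (ha : 0 ≤ a) (hb : 0 ≤ b) (f : Bool → ℝ) :
    ∫ ω, f ω ∂twoPointMeasure a b = a * f true + b * f false := by
  rw [integral_fintype Integrable.of_finite]
  simp [twoPointMeasure, measureReal_def, ha, hb]

def jensenGap (Φ : ℝ → ℝ) (t : ℝ) (p : ℝ × ℝ) : ℝ :=
  t * Φ p.1 + (1 - t) * Φ p.2 - Φ (t * p.1 + (1 - t) * p.2)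

lemma continuousOn_jensenGap {Φ : ℝ → ℝ} {I : Set ℝ} (hI : Convex ℝ I) (hΦ : ContinuousOn Φ I)
    {t : ℝ} (ht : t ∈ Icc (0 : ℝ) 1) : ContinuousOn (jensenGap Φ t) (I ×ˢ I) := by
  have hmem : MapsTo (fun p : ℝ × ℝ => t * p.1 + (1 - t) * p.2) (I ×ˢ I) I :=
    fun p hp => hI hp.1 hp.2 ht.1 (sub_nonneg.2 ht.2) (by ring)
  refine ((continuousOn_const.mul (hΦ.comp continuousOn_fst fun p hp => hp.1)).add
    (continuousOn_const.mul (hΦ.comp continuousOn_snd fun p hp => hp.2))).sub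
    (hΦ.comp (by fun_prop) hmem)

section

variable {Ω : Type} [MeasurableSpace Ω] {μ : Measure Ω} {Φ : ℝ → ℝ} {X Y : Ω → ℝ} {t : ℝ}

lemma mul_entPhi_add_mul_entPhi_sub_entPhi (hX : Integrable X μ) (hY : Integrable Y μ)
    (hΦX : Integrable (fun ω => Φ (X ω)) μ) (hΦY : Integrable (fun ω => Φ (Y ω)) μ)
    (hΦXY : Integrable (fun ω => Φ (t * X ω + (1 - t) * Y ω)) μ) :
    t * entPhi μ Φ X + (1 - t) * entPhi μ Φ Y - entPhi μ Φ (fun ω => t * X ω + (1 - t) * Y ω) =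
      ∫ ω, jensenGap Φ t (X ω, Y ω) ∂μ - jensenGap Φ t (∫ ω, X ω ∂μ, ∫ ω, Y ω ∂μ) := by
  have hmean : ∫ ω, (t * X ω + (1 - t) * Y ω) ∂μ = t * ∫ ω, X ω ∂μ + (1 - t) * ∫ ω, Y ω ∂μ := by
    rw [integral_add (hX.const_mul t) (hY.const_mul _), integral_const_mul, integral_const_mul]
  have hgap : ∫ ω, jensenGap Φ t (X ω, Y ω) ∂μ =
      t * ∫ ω, Φ (X ω) ∂μ + (1 - t) * ∫ ω, Φ (Y ω) ∂μ -
        ∫ ω, Φ (t * X ω + (1 - t) * Y ω) ∂μ := by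
    have hΦmix : Integrable (fun ω => t * Φ (X ω) + (1 - t) * Φ (Y ω)) μ :=
      (hΦX.const_mul t).add (hΦY.const_mul _)
    simp only [jensenGap]
    rw [integral_sub hΦmix hΦXY,
      integral_add (hΦX.const_mul t) (hΦY.const_mul _), integral_const_mul, integral_const_mul]
  rw [hgap, entPhi, entPhi, entPhi, hmean, jensenGap]
  ring

lemma entPhi_combo_le_of_convexOn_jensenGap [IsProbabilityMeasure μ] {I : Set ℝ}
    (hI : Convex ℝ I) (hIc : IsClosed I) (hΦ : ContinuousOn Φ I) (ht : t ∈ Icc (0 : ℝ) 1)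
    (hgap : ConvexOn ℝ (I ×ˢ I) (jensenGap Φ t)) (hXI : ∀ ω, X ω ∈ I) (hYI : ∀ ω, Y ω ∈ I)
    (hX : Integrable X μ) (hY : Integrable Y μ)
    (hΦX : Integrable (fun ω => Φ (X ω)) μ) (hΦY : Integrable (fun ω => Φ (Y ω)) μ)
    (hΦXY : Integrable (fun ω => Φ (t * X ω + (1 - t) * Y ω)) μ) :
    entPhi μ Φ (fun ω => t * X ω + (1 - t) * Y ω) ≤
      t * entPhi μ Φ X + (1 - t) * entPhi μ Φ Y := by
  have jensen := hgap.map_integral_le (continuousOn_jensenGap hI hΦ ht) (hIc.prod hIc)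
    (ae_of_all _ fun ω => ⟨hXI ω, hYI ω⟩) (hX.prodMk hY)
    (((hΦX.const_mul t).add (hΦY.const_mul _)).sub hΦXY)
  rw [integral_pair hX hY] at jensen
  linarith [mul_entPhi_add_mul_entPhi_sub_entPhi hX hY hΦX hΦY hΦXY]

end

lemma convexOn_jensenGap_of_twoPointMeasure {Φ : ℝ → ℝ} {I : Set ℝ} (hI : Convex ℝ I) (t : ℝ)
    (h : ∀ a b : ℝ, 0 ≤ a → 0 ≤ b → a + b = 1 → ∀ X Y : Bool → ℝ,
      (∀ ω, X ω ∈ I) → (∀ ω, Y ω ∈ I) →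
      entPhi (twoPointMeasure a b) Φ (fun ω => t * X ω + (1 - t) * Y ω) ≤
        t * entPhi (twoPointMeasure a b) Φ X + (1 - t) * entPhi (twoPointMeasure a b) Φ Y) :
    ConvexOn ℝ (I ×ˢ I) (jensenGap Φ t) := by
  refine ⟨hI.prod hI, fun p hp q hq a b ha hb hab => ?_⟩
  have hcombo := h a b ha hb hab (fun ω => cond ω p.1 q.1) (fun ω => cond ω p.2 q.2)
    (Bool.forall_bool.2 ⟨hq.1, hp.1⟩) (Bool.forall_bool.2 ⟨hq.2, hp.2⟩)
  rw [← sub_nonneg, mul_entPhi_add_mul_entPhi_sub_entPhi Integrable.of_finite Integrable.of_finite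
    Integrable.of_finite Integrable.of_finite Integrable.of_finite] at hcombo
  simp only [integral_twoPointMeasure ha hb, cond_true, cond_false, Prod.mk.eta] at hcombo
  have hmix : a • p + b • q = (a * p.1 + b * q.1, a * p.2 + b * q.2) := by
    ext <;> simp
  rw [hmix, smul_eq_mul, smul_eq_mul]
  linarith

theorem entPhi_convex_iff_jointly_convex_general (Φ : ℝ → ℝ)
    (hΦcont : ContinuousOn Φ (Ici 0)) :
    (∀ (Ω : Type) (_ : MeasurableSpace Ω) (μ : Measure Ω), IsProbabilityMeasure μ →
      ∀ (X Y : Ω → ℝ), Measurable X → Measurable Y →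
        (∀ ω, 0 ≤ X ω) → (∀ ω, 0 ≤ Y ω) →
        Integrable X μ → Integrable Y μ →
        Integrable (fun ω => Φ (X ω)) μ → Integrable (fun ω => Φ (Y ω)) μ →
        ∀ t ∈ Icc (0 : ℝ) 1,
          Integrable (fun ω => Φ (t * X ω + (1 - t) * Y ω)) μ →
          entPhi μ Φ (fun ω => t * X ω + (1 - t) * Y ω) ≤
            t * entPhi μ Φ X + (1 - t) * entPhi μ Φ Y) ↔
      (∀ t ∈ Icc (0 : ℝ) 1,
        ConvexOn ℝ ((Ici (0 : ℝ)) ×ˢ (Ici (0 : ℝ)))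
          (fun p => t * Φ p.1 + (1 - t) * Φ p.2 - Φ (t * p.1 + (1 - t) * p.2))) := by
  refine ⟨fun h t ht => ?_, fun h Ω _ μ _ X Y _ _ hX0 hY0 hX hY hΦX hΦY t ht hΦXY => ?_⟩
  · exact convexOn_jensenGap_of_twoPointMeasure (convex_Ici 0) t
      fun a b ha hb hab X Y hX0 hY0 =>
        h Bool _ _ (isProbabilityMeasure_twoPointMeasure ha hb hab) X Y (measurable_of_finite X)
          (measurable_of_finite Y) hX0 hY0 Integrable.of_finite Integrable.of_finite
          Integrable.of_finite Integrable.of_finite t ht Integrable.of_finite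
  · exact entPhi_combo_le_of_convexOn_jensenGap (convex_Ici 0) isClosed_Ici hΦcont ht (h t ht)
      hX0 hY0 hX hY hΦX hΦY hΦXY

/-- For `Φ : [0,∞) → ℝ` continuous and convex, convexity of the `Φ`-entropy functional
`H_Φ : Z ↦ E Φ(Z) − Φ(E Z)` over nonnegative random variables (on arbitrary probability
spaces) is equivalent to the joint convexity, for every `t ∈ [0,1]`, of the map
`(u,v) ↦ t·Φ(u) + (1−t)·Φ(v) − Φ(t·u + (1−t)·v)` on `[0,∞) × [0,∞)`. -/
theorem entPhi_convex_iff_jointly_convex (Φ : ℝ → ℝ)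
    (hΦcont : ContinuousOn Φ (Ici 0)) (hΦconv : ConvexOn ℝ (Ici 0) Φ) :
    (∀ (Ω : Type) (_ : MeasurableSpace Ω) (μ : Measure Ω), IsProbabilityMeasure μ →
      ∀ (X Y : Ω → ℝ), Measurable X → Measurable Y →
        (∀ ω, 0 ≤ X ω) → (∀ ω, 0 ≤ Y ω) →
        Integrable X μ → Integrable Y μ →
        Integrable (fun ω => Φ (X ω)) μ → Integrable (fun ω => Φ (Y ω)) μ →
        ∀ t ∈ Icc (0 : ℝ) 1,
          Integrable (fun ω => Φ (t * X ω + (1 - t) * Y ω)) μ →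
          entPhi μ Φ (fun ω => t * X ω + (1 - t) * Y ω) ≤
            t * entPhi μ Φ X + (1 - t) * entPhi μ Φ Y) ↔
      (∀ t ∈ Icc (0 : ℝ) 1,
        ConvexOn ℝ ((Ici (0 : ℝ)) ×ˢ (Ici (0 : ℝ)))
          (fun p => t * Φ p.1 + (1 - t) * Φ p.2 - Φ (t * p.1 + (1 - t) * p.2))) :=
  entPhi_convex_iff_jointly_convex_general Φ hΦcont
end

section
/- Let X be uniformly distributed over {0,1}ⁿ and f : {0,1}ⁿ → M_d⁺ a positive-semidefinite-matrix-valued function. For p ∈ (1,2) and Φ(u) = u^{2/p}, the matrix Φ-entropy satisfies H_Φ(f^p) ≤ (2−p)·E(f)·d^{1−2/p} + tr E[f²]·(1 − d^{1−2/p}), assuming the matrix Bonami–Beckner inequality (Σ_S (p−1)^{|S|}‖f̂(S)‖_{*p}²)^{1/2} ≤ (E‖f(X)‖_{*p}^p)^{1/p}. -/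
open Matrix Finset
open scoped ComplexOrder

/-- The normalized trace of a complex matrix, as a real number. -/
noncomputable def trN {d : ℕ} (M : Matrix (Fin d) (Fin d) ℂ) : ℝ :=
  ((d : ℂ)⁻¹ * M.trace).re

/-- The matrix power `A^p` (a standard matrix function) of a positive semidefinite matrix. -/
noncomputable def mPow {d : ℕ} (A : Matrix (Fin d) (Fin d) ℂ) (p : ℝ) :
    Matrix (Fin d) (Fin d) ℂ :=
  cfc (fun x : ℝ => x ^ p) A

/-- The Fourier character `χ_S(x) = (−1)^{Σ_{i∈S} x_i}` on the Boolean hypercube. -/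
noncomputable def chiS {n : ℕ} (S : Finset (Fin n)) (x : Fin n → Bool) : ℂ :=
  (-1 : ℂ) ^ (∑ i ∈ S, if x i then 1 else 0 : ℕ)

/-- The matrix-valued Fourier coefficient `f̂(S) = 2^{−n} Σ_x f(x)·χ_S(x)`. -/
noncomputable def matFourierCoeff {n d : ℕ} (f : (Fin n → Bool) → Matrix (Fin d) (Fin d) ℂ)
    (S : Finset (Fin n)) : Matrix (Fin d) (Fin d) ℂ :=
  ((2 : ℂ) ^ n)⁻¹ • ∑ x : Fin n → Bool, chiS S x • f x

/-- The Dirichlet form `E(f) = (1/4)·Σᵢ tr E[(f(X) − f(X̄^{(i)}))²]` on the Boolean hypercube. -/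
noncomputable def dirichletForm {n d : ℕ} (f : (Fin n → Bool) → Matrix (Fin d) (Fin d) ℂ) : ℝ :=
  (1 / 4) * ∑ i : Fin n, ((2 : ℝ) ^ n)⁻¹ *
    ∑ x : Fin n → Bool, trN ((f x - f (Function.update x i (!(x i)))) ^ 2)

/-- The normalized Schatten `p`-norm `‖M‖_{*p} = ((1/d)·Tr|M|^p)^{1/p}`. -/
noncomputable def nSchatten {d : ℕ} (p : ℝ) (M : Matrix (Fin d) (Fin d) ℂ) : ℝ :=
  ((d : ℝ)⁻¹ * ∑ i,
      Real.sqrt ((Matrix.posSemidef_conjTranspose_mul_self M).1.eigenvalues i) ^ p) ^ (1 / p)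

/-! In the Walsh basis, Parseval's identity gives `tr E f² = Σ_S tr f̂(S)²` and
`E(f) = Σ_S |S| tr f̂(S)²`, so Bernoulli's inequality `1 - (2 - p)|S| ≤ (p - 1)^|S|` bounds
`tr E f² - (2 - p) E(f)` by `Σ_S (p - 1)^|S| tr f̂(S)²`. Since `d^(1 - 2/p) tr M² ≤ ‖M‖_{*p}²`
(the `ℓ²`-norm of the eigenvalues is at most their `ℓᵖ`-norm), the Bonami–Beckner inequality bounds
`d^(1 - 2/p)` times this sum by `(tr E f^p)^(2/p)`, and Jensen's inequality for `u ↦ u^(2/p)` on the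
eigenvalues of `E f^p` bounds that by `tr (E f^p)^(2/p)`, which is `tr E f² - H_Φ(f^p)` since
`Φ(f^p) = f²`. -/

section NormalizedTrace

variable {d : ℕ}

lemma trN_eq_inv_mul_re_trace (M : Matrix (Fin d) (Fin d) ℂ) :
    trN M = (d : ℝ)⁻¹ * M.trace.re := by
  simp [trN, Complex.mul_re]

lemma trN_ofReal_smul (c : ℝ) (M : Matrix (Fin d) (Fin d) ℂ) :
    trN ((c : ℂ) • M) = c * trN M := by
  rw [trN_eq_inv_mul_re_trace, trN_eq_inv_mul_re_trace, trace_smul, smul_eq_mul,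
    Complex.re_ofReal_mul]
  ring

lemma trN_inv_two_pow_smul (n : ℕ) (M : Matrix (Fin d) (Fin d) ℂ) :
    trN (((2 : ℂ) ^ n)⁻¹ • M) = ((2 : ℝ) ^ n)⁻¹ * trN M := by
  rw [show ((2 : ℂ) ^ n)⁻¹ = (((2 : ℝ) ^ n)⁻¹ : ℝ) by push_cast; rfl, trN_ofReal_smul]

lemma trN_sum {ι : Type*} (s : Finset ι) (g : ι → Matrix (Fin d) (Fin d) ℂ) :
    trN (∑ i ∈ s, g i) = ∑ i ∈ s, trN (g i) := by
  simp only [trN_eq_inv_mul_re_trace, trace_sum, Complex.re_sum, Finset.mul_sum]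

lemma Matrix.PosSemidef.trN_nonneg {M : Matrix (Fin d) (Fin d) ℂ} (hM : M.PosSemidef) :
    0 ≤ trN M :=
  trN_eq_inv_mul_re_trace M ▸
    mul_nonneg (by positivity) (Complex.nonneg_iff.mp hM.trace_nonneg).1

lemma Matrix.IsHermitian.trN_sq_nonneg {M : Matrix (Fin d) (Fin d) ℂ} (hM : M.IsHermitian) :
    0 ≤ trN (M ^ 2) := by
  simpa [pow_two, hM.eq] using (posSemidef_conjTranspose_mul_self M).trN_nonneg

lemma Matrix.IsHermitian.trace_cfc {B : Matrix (Fin d) (Fin d) ℂ} (hB : B.IsHermitian)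
    (g : ℝ → ℝ) : (cfc g B).trace = ((∑ i, g (hB.eigenvalues i) : ℝ) : ℂ) := by
  have hU : star (hB.eigenvectorUnitary : Matrix (Fin d) (Fin d) ℂ) * hB.eigenvectorUnitary = 1 :=
    Unitary.coe_star_mul_self _
  rw [hB.cfc_eq, IsHermitian.cfc, Unitary.conjStarAlgAut_apply, trace_mul_cycle, hU, one_mul,
    trace_diagonal]
  simp

lemma Matrix.IsHermitian.trN_cfc {B : Matrix (Fin d) (Fin d) ℂ} (hB : B.IsHermitian)
    (g : ℝ → ℝ) : trN (cfc g B) = (d : ℝ)⁻¹ * ∑ i, g (hB.eigenvalues i) := by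
  rw [trN_eq_inv_mul_re_trace, hB.trace_cfc, Complex.ofReal_re]

lemma Matrix.IsHermitian.posSemidef_cfc {B : Matrix (Fin d) (Fin d) ℂ} (hB : B.IsHermitian)
    {g : ℝ → ℝ} (hg : ∀ i, 0 ≤ g (hB.eigenvalues i)) : (cfc g B).PosSemidef := by
  rw [hB.cfc_eq, IsHermitian.cfc, Unitary.conjStarAlgAut_apply]
  refine (PosSemidef.diagonal fun i => ?_).mul_mul_conjTranspose_same _
  simpa using hg i

end NormalizedTrace

section Fourier

variable {n d : ℕ}

lemma chiS_mul_chiS (S : Finset (Fin n)) (x y : Fin n → Bool) :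
    chiS S x * chiS S y = ∏ i ∈ S, if x i = y i then (1 : ℂ) else -1 := by
  rw [chiS, chiS, ← pow_add, ← Finset.sum_add_distrib, ← Finset.prod_pow_eq_pow_sum]
  refine Finset.prod_congr rfl fun i _ => ?_
  cases x i <;> cases y i <;> norm_num

lemma chiS_mul_self (S : Finset (Fin n)) (x : Fin n → Bool) : chiS S x * chiS S x = 1 := by
  simp [chiS_mul_chiS]

lemma sum_chiS_mul_chiS (x y : Fin n → Bool) :
    ∑ S : Finset (Fin n), chiS S x * chiS S y = if x = y then (2 : ℂ) ^ n else 0 := by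
  have expand := Finset.prod_add (fun i => if x i = y i then (1 : ℂ) else -1) (fun _ => 1) univ
  simp only [prod_const_one, mul_one, powerset_univ] at expand
  simp only [chiS_mul_chiS, ← expand]
  split_ifs with hxy
  · simp [hxy, one_add_one_eq_two]
  · obtain ⟨j, hj⟩ := Function.ne_iff.mp hxy
    exact prod_eq_zero (mem_univ j) (by simp [hj])

lemma sum_matFourierCoeff_sq (f : (Fin n → Bool) → Matrix (Fin d) (Fin d) ℂ) :
    ∑ S : Finset (Fin n), matFourierCoeff f S ^ 2 = ((2 : ℂ) ^ n)⁻¹ • ∑ x, f x ^ 2 := by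
  have h2n : (2 : ℂ) ^ n ≠ 0 := by positivity
  have orth : ∀ x, ∑ S : Finset (Fin n), ∑ y, (chiS S x * chiS S y) • (f x * f y)
      = (2 : ℂ) ^ n • f x ^ 2 := by
    intro x
    simp_rw [Finset.sum_comm (γ := Finset (Fin n)), ← Finset.sum_smul, sum_chiS_mul_chiS,
      ite_smul, zero_smul, Finset.sum_ite_eq, if_pos (mem_univ x), pow_two]
  simp_rw [matFourierCoeff, pow_two, smul_mul_smul_comm, Finset.sum_mul_sum, smul_mul_smul_comm]
  rw [← Finset.smul_sum, Finset.sum_comm, Finset.sum_congr rfl fun x _ => orth x,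
    ← Finset.smul_sum, smul_smul]
  simp_rw [pow_two]
  congr 1
  field_simp

lemma sum_trN_matFourierCoeff_sq (f : (Fin n → Bool) → Matrix (Fin d) (Fin d) ℂ) :
    ∑ S : Finset (Fin n), trN (matFourierCoeff f S ^ 2) = ((2 : ℝ) ^ n)⁻¹ * ∑ x, trN (f x ^ 2) := by
  have h := congrArg trN (sum_matFourierCoeff_sq f)
  rwa [trN_sum, trN_inv_two_pow_smul, trN_sum] at h

lemma matFourierCoeff_sub (f g : (Fin n → Bool) → Matrix (Fin d) (Fin d) ℂ)
    (S : Finset (Fin n)) :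
    matFourierCoeff (fun x => f x - g x) S = matFourierCoeff f S - matFourierCoeff g S := by
  simp only [matFourierCoeff, smul_sub, Finset.sum_sub_distrib]

lemma isHermitian_matFourierCoeff {f : (Fin n → Bool) → Matrix (Fin d) (Fin d) ℂ}
    (hf : ∀ x, (f x).IsHermitian) (S : Finset (Fin n)) : (matFourierCoeff f S).IsHermitian := by
  refine IsSelfAdjoint.smul (by simp [IsSelfAdjoint]) (isSelfAdjoint_sum _ fun x _ => ?_)
  exact IsSelfAdjoint.smul (by simp [IsSelfAdjoint, chiS]) (hf x)

def flipAt (i : Fin n) : Equiv.Perm (Fin n → Bool) :=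
  Function.Involutive.toPerm (fun x => Function.update x i (!x i)) fun x => by
    ext j
    rcases eq_or_ne j i with rfl | hj <;> simp [*]

lemma flipAt_apply (i : Fin n) (x : Fin n → Bool) :
    flipAt i x = Function.update x i (!x i) := rfl

lemma flipAt_flipAt (i : Fin n) (x : Fin n → Bool) : flipAt i (flipAt i x) = x :=
  (flipAt i).apply_symm_apply x

lemma chiS_flipAt (S : Finset (Fin n)) (i : Fin n) (x : Fin n → Bool) :
    chiS S (flipAt i x) = (if i ∈ S then -1 else 1) * chiS S x := by
  have hprod : chiS S (flipAt i x) * chiS S x = if i ∈ S then -1 else 1 := by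
    rw [chiS_mul_chiS, ← Finset.prod_ite_eq' S i (fun _ => (-1 : ℂ))]
    refine Finset.prod_congr rfl fun j _ => ?_
    rcases eq_or_ne j i with rfl | hj <;> simp [flipAt_apply, *]
  rw [← hprod, mul_assoc, chiS_mul_self, mul_one]

lemma matFourierCoeff_comp_flipAt (f : (Fin n → Bool) → Matrix (Fin d) (Fin d) ℂ) (i : Fin n)
    (S : Finset (Fin n)) :
    matFourierCoeff (fun x => f (flipAt i x)) S
      = (if i ∈ S then -1 else 1 : ℂ) • matFourierCoeff f S := by
  rw [matFourierCoeff, matFourierCoeff, ← Equiv.sum_comp (flipAt i)]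
  simp_rw [flipAt_flipAt, chiS_flipAt, mul_smul, ← Finset.smul_sum]
  exact smul_comm _ _ _

lemma matFourierCoeff_sub_comp_flipAt_sq (f : (Fin n → Bool) → Matrix (Fin d) (Fin d) ℂ)
    (i : Fin n) (S : Finset (Fin n)) :
    matFourierCoeff (fun x => f x - f (flipAt i x)) S ^ 2
      = ((if i ∈ S then 4 else 0 : ℝ) : ℂ) • matFourierCoeff f S ^ 2 := by
  rw [matFourierCoeff_sub, matFourierCoeff_comp_flipAt]
  split_ifs
  · rw [neg_one_smul, sub_neg_eq_add, ← two_smul ℂ, smul_pow]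
    norm_num
  · simp

lemma dirichletForm_eq_sum_card_mul (f : (Fin n → Bool) → Matrix (Fin d) (Fin d) ℂ) :
    dirichletForm f = ∑ S : Finset (Fin n), (S.card : ℝ) * trN (matFourierCoeff f S ^ 2) := by
  have coord : ∀ i : Fin n,
      ((2 : ℝ) ^ n)⁻¹ * ∑ x, trN ((f x - f (flipAt i x)) ^ 2)
        = ∑ S : Finset (Fin n), (if i ∈ S then 4 else 0) * trN (matFourierCoeff f S ^ 2) := by
    intro i
    simp_rw [← sum_trN_matFourierCoeff_sq, matFourierCoeff_sub_comp_flipAt_sq, trN_ofReal_smul]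
  simp_rw [dirichletForm, ← flipAt_apply, coord]
  rw [Finset.sum_comm, Finset.mul_sum]
  refine Finset.sum_congr rfl fun S _ => ?_
  rw [← Finset.sum_mul, Finset.sum_ite_mem, Finset.univ_inter, Finset.sum_const, nsmul_eq_mul]
  ring

end Fourier

lemma sum_rpow_le_rpow_sum {ι : Type*} (s : Finset ι) {b : ι → ℝ} (hb : ∀ i ∈ s, 0 ≤ b i)
    {q : ℝ} (hq : 1 ≤ q) : ∑ i ∈ s, b i ^ q ≤ (∑ i ∈ s, b i) ^ q := by
  induction s using Finset.cons_induction with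
  | empty => simp [Real.zero_rpow (by linarith : q ≠ 0)]
  | cons a s ha ih =>
    rw [Finset.forall_mem_cons] at hb
    rw [Finset.sum_cons, Finset.sum_cons]
    calc b a ^ q + ∑ i ∈ s, b i ^ q ≤ b a ^ q + (∑ i ∈ s, b i) ^ q := by gcongr; exact ih hb.2
      _ ≤ (b a + ∑ i ∈ s, b i) ^ q :=
        Real.add_rpow_le_rpow_add hb.1 (Finset.sum_nonneg hb.2) hq

lemma sum_sq_le_rpow_sum_abs_rpow {ι : Type*} (s : Finset ι) (a : ι → ℝ) {p : ℝ} (hp0 : 0 < p)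
    (hp2 : p ≤ 2) : ∑ i ∈ s, a i ^ 2 ≤ (∑ i ∈ s, |a i| ^ p) ^ (2 / p) := by
  have hsq : ∀ i, a i ^ 2 = (|a i| ^ p) ^ (2 / p) := fun i => by
    rw [← Real.rpow_mul (abs_nonneg _), mul_div_cancel₀ _ hp0.ne', Real.rpow_two, sq_abs]
  simp_rw [hsq]
  exact sum_rpow_le_rpow_sum s (fun i _ => by positivity) ((one_le_div hp0).mpr hp2)

section SchattenNorm

variable {d : ℕ}

lemma nSchatten_nonneg (p : ℝ) (M : Matrix (Fin d) (Fin d) ℂ) : 0 ≤ nSchatten p M := by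
  unfold nSchatten
  positivity

lemma Matrix.IsHermitian.nSchatten_eq {M : Matrix (Fin d) (Fin d) ℂ} (hM : M.IsHermitian)
    (p : ℝ) : nSchatten p M = ((d : ℝ)⁻¹ * ∑ i, |hM.eigenvalues i| ^ p) ^ (1 / p) := by
  have hMM := (posSemidef_conjTranspose_mul_self M).1
  -- match the eigenvalues of `Mᴴ * M = M ^ 2` with the squared eigenvalues of `M` via traces
  set g : ℝ → ℝ := fun x => Real.sqrt x ^ p
  have hsq : cfc g (Mᴴ * M) = cfc (fun x => g (x ^ 2)) M := by
    rw [hM.eq, ← pow_two, cfc_comp_pow g 2 M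
      ((finite_real_spectrum.image _).continuousOn g) hM.isSelfAdjoint]
  have hsum : ∑ i, g (hMM.eigenvalues i) = ∑ i, g (hM.eigenvalues i ^ 2) := by
    exact_mod_cast (hMM.trace_cfc g).symm.trans (hsq ▸ hM.trace_cfc _)
  rw [nSchatten]
  congr 2
  exact hsum.trans (by simp only [g, Real.sqrt_sq_eq_abs])

lemma Matrix.PosSemidef.nSchatten_rpow {A : Matrix (Fin d) (Fin d) ℂ} (hA : A.PosSemidef)
    {p : ℝ} (hp : p ≠ 0) : nSchatten p A ^ p = trN (mPow A p) := by
  rw [hA.1.nSchatten_eq, ← Real.rpow_mul (by positivity), one_div_mul_cancel hp, Real.rpow_one,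
    mPow, hA.1.trN_cfc]
  simp_rw [abs_of_nonneg (hA.eigenvalues_nonneg _)]

lemma Matrix.IsHermitian.rpow_mul_trN_sq_le_nSchatten_sq {M : Matrix (Fin d) (Fin d) ℂ}
    (hM : M.IsHermitian) {p : ℝ} (hp0 : 0 < p) (hp2 : p ≤ 2) :
    (d : ℝ) ^ (1 - 2 / p) * trN (M ^ 2) ≤ nSchatten p M ^ (2 : ℝ) := by
  have hscale : (d : ℝ) ^ (1 - 2 / p) * (d : ℝ)⁻¹ = ((d : ℝ)⁻¹) ^ (2 / p) := by
    have hexp : (1 - 2 / p) + -1 = -(2 / p) := by ring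
    have hexp_ne : (1 - 2 / p) + -1 ≠ 0 := by rw [hexp]; exact neg_ne_zero.mpr (by positivity)
    rw [Real.inv_rpow d.cast_nonneg, ← Real.rpow_neg d.cast_nonneg, ← hexp,
      Real.rpow_add' d.cast_nonneg hexp_ne, Real.rpow_neg_one]
  rw [hM.nSchatten_eq, ← Real.rpow_mul (by positivity), one_div_mul_eq_div,
    Real.mul_rpow (by positivity) (by positivity), ← cfc_pow_id (R := ℝ) M 2 hM.isSelfAdjoint,
    hM.trN_cfc, ← mul_assoc, hscale]
  gcongr
  exact sum_sq_le_rpow_sum_abs_rpow _ _ hp0 hp2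

lemma Matrix.PosSemidef.trN_rpow_le_trN_mPow (hd : 0 < d) {E : Matrix (Fin d) (Fin d) ℂ}
    (hE : E.PosSemidef) {q : ℝ} (hq : 1 ≤ q) : trN E ^ q ≤ trN (mPow E q) := by
  have hweights : ∑ _i : Fin d, (d : ℝ)⁻¹ = 1 := by simp [hd.ne']
  have jensen := Real.rpow_arith_mean_le_arith_mean_rpow univ (fun _ => (d : ℝ)⁻¹)
    hE.1.eigenvalues (fun _ _ => by positivity) hweights (fun i _ => hE.eigenvalues_nonneg i) hq
  have hmean := hE.1.trN_cfc id
  rw [cfc_id ℝ E hE.1.isSelfAdjoint] at hmean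
  rw [hmean, mPow, hE.1.trN_cfc]
  simpa [Finset.mul_sum] using jensen

end SchattenNorm

lemma le_rpow_two_div_of_rpow_half_le {L M p : ℝ} (hL : 0 ≤ L) (hM : 0 ≤ M)
    (h : L ^ (1 / 2 : ℝ) ≤ M ^ (1 / p)) : L ≤ M ^ (2 / p) := by
  have hsq := Real.rpow_le_rpow (by positivity) h zero_le_two
  rwa [← Real.rpow_mul hL, ← Real.rpow_mul hM, one_div_mul_cancel two_ne_zero, Real.rpow_one,
    one_div_mul_eq_div] at hsq

lemma mean_trN_sq_sub_mul_dirichletForm_le {n d : ℕ} {f : (Fin n → Bool) → Matrix (Fin d) (Fin d) ℂ}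
    (hf : ∀ x, (f x).IsHermitian) {p : ℝ} (hp : 0 ≤ p) :
    ((2 : ℝ) ^ n)⁻¹ * ∑ x, trN (f x ^ 2) - (2 - p) * dirichletForm f
      ≤ ∑ S : Finset (Fin n), (p - 1) ^ S.card * trN (matFourierCoeff f S ^ 2) := by
  rw [← sum_trN_matFourierCoeff_sq, dirichletForm_eq_sum_card_mul, Finset.mul_sum,
    ← Finset.sum_sub_distrib]
  refine Finset.sum_le_sum fun S _ => ?_
  have hbernoulli : 1 + (S.card : ℝ) * (p - 2) ≤ (p - 1) ^ S.card := by
    have h := one_add_mul_le_pow (by linarith : (-2 : ℝ) ≤ p - 2) S.card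
    rwa [show 1 + (p - 2) = p - 1 by ring] at h
  calc trN (matFourierCoeff f S ^ 2) - (2 - p) * (S.card * trN (matFourierCoeff f S ^ 2))
      = (1 + S.card * (p - 2)) * trN (matFourierCoeff f S ^ 2) := by ring
    _ ≤ (p - 1) ^ S.card * trN (matFourierCoeff f S ^ 2) :=
      mul_le_mul_of_nonneg_right hbernoulli (isHermitian_matFourierCoeff hf S).trN_sq_nonneg

/-- **Matrix `Φ`-Sobolev inequality for symmetric Bernoulli random variables.**
Let `X` be uniform on `{0,1}ⁿ` and `f : {0,1}ⁿ → M_d⁺` a positive-semidefinite-matrix-valued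
function.  For `p ∈ (1,2)` and `Φ(u) = u^{2/p}`, assuming the matrix Bonami–Beckner inequality,
`H_Φ(f^p) ≤ (2−p)·E(f)·d^{1−2/p} + tr E[f²]·(1 − d^{1−2/p})`.  Here
`H_Φ(f^p) = tr E[f²] − tr (E[f^p])^{2/p}`. -/
theorem matrix_phi_sobolev_bernoulli {n d : ℕ} (hd : 0 < d)
    (f : (Fin n → Bool) → Matrix (Fin d) (Fin d) ℂ)
    (hf : ∀ x, (f x).PosSemidef)
    (p : ℝ) (hp1 : 1 < p) (hp2 : p < 2)
    -- the matrix Bonami–Beckner inequality, taken as a hypothesis: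
    (hBB : (∑ S : Finset (Fin n), (p - 1) ^ S.card * nSchatten p (matFourierCoeff f S) ^ (2 : ℝ))
        ^ ((1 : ℝ) / 2) ≤
      (((2 : ℝ) ^ n)⁻¹ * ∑ x : Fin n → Bool, nSchatten p (f x) ^ p) ^ (1 / p)) :
    (((2 : ℝ) ^ n)⁻¹ * ∑ x : Fin n → Bool, trN (f x ^ 2)) -
        trN (mPow (((2 : ℂ) ^ n)⁻¹ • ∑ x : Fin n → Bool, mPow (f x) p) (2 / p)) ≤
      (2 - p) * dirichletForm f * (d : ℝ) ^ (1 - 2 / p) +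
        (((2 : ℝ) ^ n)⁻¹ * ∑ x : Fin n → Bool, trN (f x ^ 2)) *
          (1 - (d : ℝ) ^ (1 - 2 / p)) := by
  have hp0 : 0 < p := by linarith
  have hherm : ∀ x, (f x).IsHermitian := fun x => (hf x).1
  set κ : ℝ := (d : ℝ) ^ (1 - 2 / p)
  set Ef : Matrix (Fin d) (Fin d) ℂ := ((2 : ℂ) ^ n)⁻¹ • ∑ x, mPow (f x) p
  have hEf : Ef.PosSemidef := PosSemidef.smul (posSemidef_sum _ fun x _ =>
    (hherm x).posSemidef_cfc fun i => Real.rpow_nonneg ((hf x).eigenvalues_nonneg i) p)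
    (by positivity)
  have htrEf : trN Ef = ((2 : ℝ) ^ n)⁻¹ * ∑ x, nSchatten p (f x) ^ p := by
    simp_rw [Ef, trN_inv_two_pow_smul, trN_sum, (hf _).nSchatten_rpow hp0.ne']
  have bernoulli := mean_trN_sq_sub_mul_dirichletForm_le hherm hp0.le
  have comparison : κ * ∑ S : Finset (Fin n), (p - 1) ^ S.card * trN (matFourierCoeff f S ^ 2)
      ≤ ∑ S : Finset (Fin n), (p - 1) ^ S.card * nSchatten p (matFourierCoeff f S) ^ (2 : ℝ) := by
    rw [Finset.mul_sum]
    refine Finset.sum_le_sum fun S _ => ?_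
    rw [mul_left_comm]
    exact mul_le_mul_of_nonneg_left ((isHermitian_matFourierCoeff hherm S)
      |>.rpow_mul_trN_sq_le_nSchatten_sq hp0 hp2.le) (pow_nonneg (by linarith) _)
  have bonamiBeckner := le_rpow_two_div_of_rpow_half_le
    (Finset.sum_nonneg fun S _ => mul_nonneg (pow_nonneg (by linarith) _)
      (Real.rpow_nonneg (nSchatten_nonneg _ _) _))
    hEf.trN_nonneg (htrEf ▸ hBB)
  have jensen := hEf.trN_rpow_le_trN_mPow hd ((one_le_div hp0).mpr hp2.le)
  have hκ : 0 ≤ κ := by positivity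
  linear_combination mul_le_mul_of_nonneg_left bernoulli hκ + comparison + bonamiBeckner + jensen
end

section
/- Let μ be a probability distribution on a finite set X, K(y|x) a Markov kernel from X to a finite set Y with μK strictly positive, and K*(x|y) = K(y|x)μ(x)/(μK)(y) the backward channel. For every convex function Φ : [0,∞) → ℝ (extended to positive semidefinite matrices as a standard matrix function) and every function f : X → M_d⁺, one has tr E_{μK}[Φ(K* f)] ≤ tr E_μ[Φ(f)], where (K* f)(y) = Σ_x K*(x|y) f(x). Consequently H_Φ(K* f) ≤ H_Φ(f) since E_{μK}[K* f] = E_μ[f]. -/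
open Matrix Finset
open scoped ComplexOrder

variable {X Y : Type} [Fintype X] [Fintype Y]

/-- The output distribution `μK(y) = Σ_x μ(x)·K(y|x)` of a Markov kernel `K`. -/
noncomputable def muK (μ : X → ℝ) (K : X → Y → ℝ) (y : Y) : ℝ :=
  ∑ x, μ x * K x y

/-- The action of the backward channel `K*(x|y) = K(y|x)μ(x)/(μK)(y)` on a matrix-valued
function: `(K* f)(y) = Σ_x K*(x|y)·f(x)`. -/
noncomputable def KstarAct {d : ℕ} (μ : X → ℝ) (K : X → Y → ℝ)
    (f : X → Matrix (Fin d) (Fin d) ℂ) (y : Y) : Matrix (Fin d) (Fin d) ℂ :=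
  ∑ x, (K x y * μ x / muK μ K y) • f x

/-! In an eigenbasis `(v j)` of `M = ∑ i, p i • A i` each eigenvalue of `M` is the `p`-average
of the numbers `⟪v j, A i v j⟫`, so scalar Jensen bounds `Φ (λ_j M)` by the `p`-average of
`Φ ⟪v j, A i v j⟫`, and Peierls' inequality `∑ j, Φ ⟪w j, A w j⟫ ≤ tr Φ(A)`, valid for every
orthonormal basis `w`, yields `tr Φ(∑ i, p i • A i) ≤ ∑ i, p i * tr Φ(A i)`. For the backward
channel the weights are `K*(·|y)`, and `μK(y) K*(x|y) = μ(x) K(y|x)` turns the `μK`-average of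
these bounds into the `μ`-average; the same identity gives `E_{μK}[K* f] = E_μ[f]`. -/

open scoped InnerProductSpace

namespace Matrix.IsHermitian

variable {𝕜 n : Type*} [RCLike 𝕜] [Fintype n] [DecidableEq n] {A : Matrix n n 𝕜}

lemma dotProduct_mulVec_eq_sum (hA : A.IsHermitian) (w : EuclideanSpace 𝕜 n) :
    star ⇑w ⬝ᵥ A *ᵥ ⇑w =
      ((∑ k, hA.eigenvalues k * ‖⟪hA.eigenvectorBasis k, w⟫_𝕜‖ ^ 2 : ℝ) : 𝕜) := by
  set v := hA.eigenvectorBasis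
  have hw : A *ᵥ ⇑w = ∑ k, ⟪v k, w⟫_𝕜 • hA.eigenvalues k • ⇑(v k) := by
    conv_lhs => rw [← v.sum_repr' w]
    simp only [WithLp.ofLp_sum, WithLp.ofLp_smul, mulVec_sum, mulVec_smul,
      mulVec_eigenvectorBasis, v]
  rw [hw, dotProduct_sum]
  push_cast
  refine Finset.sum_congr rfl fun k _ => ?_
  rw [dotProduct_smul, dotProduct_smul, dotProduct_comm,
    ← EuclideanSpace.inner_eq_star_dotProduct, ← inner_conj_symm w (v k),
    RCLike.real_smul_eq_coe_mul, smul_eq_mul, mul_left_comm, RCLike.mul_conj]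

lemma re_dotProduct_mulVec_eq_sum (hA : A.IsHermitian) (w : EuclideanSpace 𝕜 n) :
    RCLike.re (star ⇑w ⬝ᵥ A *ᵥ ⇑w) =
      ∑ k, ‖⟪hA.eigenvectorBasis k, w⟫_𝕜‖ ^ 2 * hA.eigenvalues k := by
  simp_rw [hA.dotProduct_mulVec_eq_sum, RCLike.ofReal_re, mul_comm]

lemma trace_cfc_s14 (hA : A.IsHermitian) (f : ℝ → ℝ) :
    (cfc f A).trace = ∑ i, (f (hA.eigenvalues i) : 𝕜) := by
  rw [hA.cfc_eq, IsHermitian.cfc, Unitary.conjStarAlgAut_apply, trace_mul_cycle,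
    Unitary.coe_star_mul_self, one_mul, trace_diagonal]
  rfl

variable {s : Set ℝ} {Φ : ℝ → ℝ}

lemma re_dotProduct_mulVec_mem (hA : A.IsHermitian) (hs : Convex ℝ s)
    (hAs : ∀ k, hA.eigenvalues k ∈ s) {w : EuclideanSpace 𝕜 n} (hw : ‖w‖ = 1) :
    RCLike.re (star ⇑w ⬝ᵥ A *ᵥ ⇑w) ∈ s := by
  rw [hA.re_dotProduct_mulVec_eq_sum]
  refine hs.sum_mem (fun k _ => by positivity) ?_ fun k _ => hAs k
  rw [hA.eigenvectorBasis.sum_sq_norm_inner_right, hw, one_pow]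

/-- Peierls' inequality: the weights `‖⟪v k, w j⟫‖ ^ 2` form a doubly stochastic matrix. -/
lemma sum_map_re_dotProduct_mulVec_le (hA : A.IsHermitian) (hΦ : ConvexOn ℝ s Φ)
    (hAs : ∀ k, hA.eigenvalues k ∈ s) (w : OrthonormalBasis n 𝕜 (EuclideanSpace 𝕜 n)) :
    ∑ j, Φ (RCLike.re (star ⇑(w j) ⬝ᵥ A *ᵥ ⇑(w j))) ≤ ∑ k, Φ (hA.eigenvalues k) := by
  set v := hA.eigenvectorBasis
  calc ∑ j, Φ (RCLike.re (star ⇑(w j) ⬝ᵥ A *ᵥ ⇑(w j)))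
      ≤ ∑ j, ∑ k, ‖⟪v k, w j⟫_𝕜‖ ^ 2 * Φ (hA.eigenvalues k) := by
        refine Finset.sum_le_sum fun j _ => ?_
        rw [hA.re_dotProduct_mulVec_eq_sum]
        refine hΦ.map_sum_le (fun k _ => by positivity) ?_ fun k _ => hAs k
        rw [v.sum_sq_norm_inner_right, w.norm_eq_one, one_pow]
    _ = ∑ k, Φ (hA.eigenvalues k) := by
        rw [Finset.sum_comm]
        refine Finset.sum_congr rfl fun k _ => ?_
        rw [← Finset.sum_mul, w.sum_sq_norm_inner_left, v.norm_eq_one, one_pow, one_mul]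

end Matrix.IsHermitian

namespace ConvexOn

variable {𝕜 n ι : Type*} [RCLike 𝕜] [Fintype n] [DecidableEq n] [Fintype ι]
  {s : Set ℝ} {Φ : ℝ → ℝ}

theorem sum_map_eigenvalues_sum_smul_le (hΦ : ConvexOn ℝ s Φ) {p : ι → ℝ}
    (hp0 : ∀ i, 0 ≤ p i) (hp1 : ∑ i, p i = 1) {A : ι → Matrix n n 𝕜}
    (hA : ∀ i, (A i).IsHermitian) (hAs : ∀ i k, (hA i).eigenvalues k ∈ s)
    (hM : (∑ i, p i • A i).IsHermitian) :
    ∑ j, Φ (hM.eigenvalues j) ≤ ∑ i, p i * ∑ k, Φ ((hA i).eigenvalues k) := by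
  set v := hM.eigenvectorBasis
  set a : ι → n → ℝ := fun i j => RCLike.re (star ⇑(v j) ⬝ᵥ A i *ᵥ ⇑(v j))
  have ha : ∀ j, hM.eigenvalues j = ∑ i, p i • a i j := by
    intro j
    simp only [hM.eigenvalues_eq, a, v, sum_mulVec, smul_mulVec, dotProduct_sum,
      dotProduct_smul, map_sum, RCLike.smul_re, smul_eq_mul]
  calc ∑ j, Φ (hM.eigenvalues j)
      ≤ ∑ j, ∑ i, p i • Φ (a i j) := by
        refine Finset.sum_le_sum fun j _ => ?_
        rw [ha j]
        exact hΦ.map_sum_le (fun i _ => hp0 i) hp1 fun i _ =>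
          (hA i).re_dotProduct_mulVec_mem hΦ.1 (hAs i) (v.norm_eq_one j)
    _ = ∑ i, p i * ∑ j, Φ (a i j) := by
        rw [Finset.sum_comm]
        simp only [smul_eq_mul, Finset.mul_sum]
    _ ≤ ∑ i, p i * ∑ k, Φ ((hA i).eigenvalues k) :=
        Finset.sum_le_sum fun i _ => mul_le_mul_of_nonneg_left
          ((hA i).sum_map_re_dotProduct_mulVec_le hΦ (hAs i) v) (hp0 i)

end ConvexOn

lemma trN_cfc {d : ℕ} {M : Matrix (Fin d) (Fin d) ℂ} (hM : M.IsHermitian) (Φ : ℝ → ℝ) :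
    trN (cfc Φ M) = (d : ℝ)⁻¹ * ∑ j, Φ (hM.eigenvalues j) := by
  simp [trN, hM.trace_cfc_s14]

theorem ConvexOn.trN_cfc_sum_smul_le {d : ℕ} {ι : Type*} [Fintype ι] {s : Set ℝ} {Φ : ℝ → ℝ}
    (hΦ : ConvexOn ℝ s Φ) {p : ι → ℝ} (hp0 : ∀ i, 0 ≤ p i) (hp1 : ∑ i, p i = 1)
    {A : ι → Matrix (Fin d) (Fin d) ℂ} (hA : ∀ i, (A i).IsHermitian)
    (hAs : ∀ i k, (hA i).eigenvalues k ∈ s) :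
    trN (cfc Φ (∑ i, p i • A i)) ≤ ∑ i, p i * trN (cfc Φ (A i)) := by
  have hM : (∑ i, p i • A i).IsHermitian :=
    isSelfAdjoint_sum _ fun i _ => (hA i).smul (IsSelfAdjoint.all (p i))
  simp only [trN_cfc hM, trN_cfc (hA _), mul_left_comm _ ((d : ℝ)⁻¹), ← Finset.mul_sum]
  exact mul_le_mul_of_nonneg_left (hΦ.sum_map_eigenvalues_sum_smul_le hp0 hp1 hA hAs hM)
    (by positivity)

lemma sum_muK_smul_backward_sum {μ : X → ℝ} {K : X → Y → ℝ} {M : Type*} [AddCommMonoid M]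
    [Module ℝ M]    (hK1 : ∀ x, ∑ y, K x y = 1) (hμK : ∀ y, muK μ K y ≠ 0) (g : X → M) :
    ∑ y, muK μ K y • ∑ x, (K x y * μ x / muK μ K y) • g x = ∑ x, μ x • g x := by
  simp_rw [Finset.smul_sum, smul_smul, mul_div_cancel₀ _ (hμK _)]
  rw [Finset.sum_comm]
  refine Finset.sum_congr rfl fun x _ => ?_
  rw [← Finset.sum_smul, ← Finset.sum_mul, hK1 x, one_mul]

theorem backward_channel_entropy_contraction_general {d : ℕ}
    (μ : X → ℝ) (hμpos : ∀ x, 0 < μ x)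
    (K : X → Y → ℝ) (hK0 : ∀ x y, 0 ≤ K x y) (hK1 : ∀ x, ∑ y, K x y = 1)
    (hμK : ∀ y, 0 < muK μ K y)
    (Φ : ℝ → ℝ) (hΦconv : ConvexOn ℝ (Set.Ici 0) Φ)
    (f : X → Matrix (Fin d) (Fin d) ℂ) (hf : ∀ x, (f x).PosSemidef) :
    ((∑ y, muK μ K y * trN (cfc Φ (KstarAct μ K f y))) ≤
        ∑ x, μ x * trN (cfc Φ (f x))) ∧
      ((∑ y, muK μ K y * trN (cfc Φ (KstarAct μ K f y))) -
          trN (cfc Φ (∑ y, muK μ K y • KstarAct μ K f y)) ≤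
        (∑ x, μ x * trN (cfc Φ (f x))) - trN (cfc Φ (∑ x, μ x • f x))) := by
  have hμK0 : ∀ y, muK μ K y ≠ 0 := fun y => (hμK y).ne'
  have hq1 : ∀ y, ∑ x, K x y * μ x / muK μ K y = 1 := fun y => by
    rw [← Finset.sum_div, div_eq_one_iff_eq (hμK0 y), muK]
    exact Finset.sum_congr rfl fun x _ => mul_comm _ _
  have hjensen : ∀ y, trN (cfc Φ (KstarAct μ K f y)) ≤
      ∑ x, (K x y * μ x / muK μ K y) * trN (cfc Φ (f x)) := fun y =>
    hΦconv.trN_cfc_sum_smul_le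
      (fun x => div_nonneg (mul_nonneg (hK0 x y) (hμpos x).le) (hμK y).le)
      (hq1 y) (fun x => (hf x).1) fun x => (hf x).eigenvalues_nonneg
  have hmain : ∑ y, muK μ K y * trN (cfc Φ (KstarAct μ K f y)) ≤
      ∑ x, μ x * trN (cfc Φ (f x)) :=
    calc ∑ y, muK μ K y * trN (cfc Φ (KstarAct μ K f y))
        ≤ ∑ y, muK μ K y * ∑ x, (K x y * μ x / muK μ K y) * trN (cfc Φ (f x)) :=
          Finset.sum_le_sum fun y _ => mul_le_mul_of_nonneg_left (hjensen y) (hμK y).le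
      _ = ∑ x, μ x * trN (cfc Φ (f x)) := by
          simpa only [smul_eq_mul] using
            sum_muK_smul_backward_sum hK1 hμK0 fun x => trN (cfc Φ (f x))
  have hmean : ∑ y, muK μ K y • KstarAct μ K f y = ∑ x, μ x • f x :=
    sum_muK_smul_backward_sum hK1 hμK0 f
  exact ⟨hmain, hmean ▸ sub_le_sub_right hmain _⟩

/-- Jensen-type inequality for backward channels: for `μ` a strictly positive probability
distribution on a finite set `X`, `K` a Markov kernel with `μK` strictly positive, every convex
`Φ : [0,∞) → ℝ` (extended to positive semidefinite matrices as a standard matrix function) and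
every `f : X → M_d⁺`, `tr E_{μK}[Φ(K* f)] ≤ tr E_μ[Φ(f)]`; consequently `H_Φ(K* f) ≤ H_Φ(f)`
since `E_{μK}[K* f] = E_μ[f]`. -/
theorem backward_channel_entropy_contraction {d : ℕ}
    (μ : X → ℝ) (hμpos : ∀ x, 0 < μ x) (hμ1 : ∑ x, μ x = 1)
    (K : X → Y → ℝ) (hK0 : ∀ x y, 0 ≤ K x y) (hK1 : ∀ x, ∑ y, K x y = 1)
    (hμK : ∀ y, 0 < muK μ K y)
    (Φ : ℝ → ℝ) (hΦcont : ContinuousOn Φ (Set.Ici 0)) (hΦconv : ConvexOn ℝ (Set.Ici 0) Φ)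
    (f : X → Matrix (Fin d) (Fin d) ℂ) (hf : ∀ x, (f x).PosSemidef) :
    ((∑ y, muK μ K y * trN (cfc Φ (KstarAct μ K f y))) ≤
        ∑ x, μ x * trN (cfc Φ (f x))) ∧
      ((∑ y, muK μ K y * trN (cfc Φ (KstarAct μ K f y))) -
          trN (cfc Φ (∑ y, muK μ K y • KstarAct μ K f y)) ≤
        (∑ x, μ x * trN (cfc Φ (f x))) - trN (cfc Φ (∑ x, μ x • f x))) :=
  backward_channel_entropy_contraction_general μ hμpos K hK0 hK1 hμK Φ hΦconv f hf
end
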